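/- With a_t, b_t, c_t as in the diffusion bridge kernel, the following hold on (0, T): a_t′ − a_t c_t′/c_t = g²(t) a_t/(2 c_t²) and b_t′ − b_t c_t′/c_t = −g²(t) b_t/(2 c_t²). Consequently the DBIM ODE d(x_t/c_t) = x_T d(a_t/c_t) + x̂ d(b_t/c_t), when expanded as an ODE in x_t, has drift (c_t′/c_t) x_t + (g²(t) a_t/(2c_t²)) x_T − (g²(t) b_t/(2c_t²)) x̂, which coincides with the DDBM probability-flow ODE drift (f + g²/σ_t² − g²/(2c_t²)) x_t + (g² a_t/(2c_t²)) x_T − (g² b_t/(2c_t²)) x̂. -/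

import Mathlib

/-!
Put `I_t = ∫₀ᵗ g²/α²`, so that `σ_t² = α_t² I_t` and `SNR_t = 1/I_t`. Then
`a = (α_t/α_T)(I_t/I_T)`, `b = α_t (1 - I_t/I_T)` and `c² = α_t² I_t (1 - I_t/I_T)`, and the
logarithmic derivatives of `a`, `b`, `c` are `f + I'/I`, `f - I'/(I_T - I)` and
`f + I'/(2I) - I'/(2(I_T - I))`. Since `I' = g²/α²`, the quantity `g²/(2c²)` equals
`I'/(2I) + I'/(2(I_T - I))`, which is the difference of the logarithmic derivatives of `a` and `c`
(and minus that of `b` and `c`), while `g²/σ² = I'/I`.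
-/

open Real

theorem hasDerivAt_exp_integral {f : ℝ → ℝ} (hf : Continuous f) (a t : ℝ) :
    HasDerivAt (fun s => exp (∫ τ in a..s, f τ)) (f t * exp (∫ τ in a..t, f τ)) t := by
  simpa only [mul_comm] using (hf.integral_hasStrictDerivAt a t).hasDerivAt.exp

theorem strictMono_integral_of_pos {f : ℝ → ℝ} (hf : Continuous f) (hpos : ∀ x, 0 < f x)
    (a : ℝ) : StrictMono fun s => ∫ τ in a..s, f τ :=
  strictMono_of_hasDerivAt_pos (fun s => (hf.integral_hasStrictDerivAt a s).hasDerivAt) hpos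

noncomputable section

namespace DiffusionBridge

def coeffA (α I : ℝ → ℝ) (T t : ℝ) : ℝ := α t / α T * (I t / I T)

def coeffB (α I : ℝ → ℝ) (T t : ℝ) : ℝ := α t * (1 - I t / I T)

def coeffC (α I : ℝ → ℝ) (T t : ℝ) : ℝ := √(α t ^ 2 * I t * (1 - I t / I T))

variable {α I : ℝ → ℝ} {T t α' I' : ℝ}

theorem hasDerivAt_coeffA (hα : HasDerivAt α α' t) (hI : HasDerivAt I I' t)
    (hαt : α t ≠ 0) (hIt : I t ≠ 0) :
    HasDerivAt (coeffA α I T) (coeffA α I T t * (α' / α t + I' / I t)) t := by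
  refine ((hα.div_const (α T)).mul (hI.div_const (I T))).congr_deriv ?_
  unfold coeffA
  field_simp

theorem hasDerivAt_coeffB (hα : HasDerivAt α α' t) (hI : HasDerivAt I I' t)
    (hαt : α t ≠ 0) (hIT : I t ≠ I T) (hIT₀ : I T ≠ 0) :
    HasDerivAt (coeffB α I T) (coeffB α I T t * (α' / α t - I' / (I T - I t))) t := by
  refine (hα.mul ((hI.div_const (I T)).const_sub 1)).congr_deriv ?_
  have : I T - I t ≠ 0 := sub_ne_zero.mpr hIT.symm
  unfold coeffB
  field_simp
  ring

theorem coeffC_radicand_pos (hαt : α t ≠ 0) (hI : 0 < I t) (hIT : I t < I T) :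
    0 < α t ^ 2 * I t * (1 - I t / I T) := by
  have : 0 < 1 - I t / I T := sub_pos.mpr ((div_lt_one (hI.trans hIT)).mpr hIT)
  positivity

theorem coeffC_sq (hαt : α t ≠ 0) (hI : 0 < I t) (hIT : I t < I T) :
    coeffC α I T t ^ 2 = α t ^ 2 * I t * (1 - I t / I T) :=
  sq_sqrt (coeffC_radicand_pos hαt hI hIT).le

theorem coeffC_pos (hαt : α t ≠ 0) (hI : 0 < I t) (hIT : I t < I T) : 0 < coeffC α I T t :=
  sqrt_pos.mpr (coeffC_radicand_pos hαt hI hIT)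

theorem hasDerivAt_coeffC (hα : HasDerivAt α α' t) (hI : HasDerivAt I I' t)
    (hαt : α t ≠ 0) (hI₀ : 0 < I t) (hIT : I t < I T) :
    HasDerivAt (coeffC α I T)
      (coeffC α I T t * (α' / α t + I' / I t / 2 - I' / (I T - I t) / 2)) t := by
  have hradicand := ((hα.pow 2).mul hI).mul ((hI.div_const (I T)).const_sub 1)
  refine (hradicand.sqrt (coeffC_radicand_pos hαt hI₀ hIT).ne').congr_deriv ?_
  have hc := (coeffC_pos hαt hI₀ hIT).ne'
  have : I T - I t ≠ 0 := sub_ne_zero.mpr hIT.ne'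
  have : I T ≠ 0 := (hI₀.trans hIT).ne'
  change _ / (2 * coeffC α I T t) = _
  simp only [Pi.mul_apply, Pi.pow_apply]
  field_simp
  rw [coeffC_sq hαt hI₀ hIT]
  field_simp
  ring

theorem div_two_mul_coeffC_sq (γ : ℝ) (hαt : α t ≠ 0) (hI : 0 < I t) (hIT : I t < I T) :
    γ / (2 * coeffC α I T t ^ 2) = (γ / α t ^ 2 / I t + γ / α t ^ 2 / (I T - I t)) / 2 := by
  have : I T - I t ≠ 0 := sub_ne_zero.mpr hIT.ne'
  have : I T ≠ 0 := (hI.trans hIT).ne'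
  rw [coeffC_sq hαt hI hIT]
  field_simp
  ring

theorem exists_hasDerivAt_coeff_drift {φ γ : ℝ} (hα : HasDerivAt α (φ * α t) t)
    (hI : HasDerivAt I (γ / α t ^ 2) t) (hαt : α t ≠ 0) (hI₀ : 0 < I t) (hIT : I t < I T) :
    ∃ da db dc : ℝ, HasDerivAt (coeffA α I T) da t ∧ HasDerivAt (coeffB α I T) db t ∧
      HasDerivAt (coeffC α I T) dc t ∧
      da - coeffA α I T t * dc / coeffC α I T t = γ * coeffA α I T t / (2 * coeffC α I T t ^ 2) ∧
      db - coeffB α I T t * dc / coeffC α I T t =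
        -(γ * coeffB α I T t / (2 * coeffC α I T t ^ 2)) ∧
      dc / coeffC α I T t = φ + γ / (α t ^ 2 * I t) - γ / (2 * coeffC α I T t ^ 2) := by
  have hA := hasDerivAt_coeffA (T := T) hα hI hαt hI₀.ne'
  have hB := hasDerivAt_coeffB hα hI hαt hIT.ne (hI₀.trans hIT).ne'
  have hC := hasDerivAt_coeffC hα hI hαt hI₀ hIT
  rw [mul_div_cancel_right₀ _ hαt] at hA hB hC
  have key := div_two_mul_coeffC_sq γ hαt hI₀ hIT
  have hc := (coeffC_pos hαt hI₀ hIT).ne'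
  refine ⟨_, _, _, hA, hB, hC, ?_, ?_, ?_⟩
  · rw [mul_div_assoc (coeffA α I T t), mul_div_cancel_left₀ _ hc, mul_comm γ, mul_div_assoc, key]
    ring
  · rw [mul_div_assoc (coeffB α I T t), mul_div_cancel_left₀ _ hc, mul_comm γ, mul_div_assoc, key]
    ring
  · rw [mul_div_cancel_left₀ _ hc, key, div_mul_eq_div_div]
    ring

end DiffusionBridge

end

open DiffusionBridge in
theorem dbim_ode_equals_pf_ode_general (d : ℕ) (f g : ℝ → ℝ)
    (hf : Continuous f) (hg : Continuous g) (hgpos : ∀ t, 0 < g t)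
    (T : ℝ)
    (α σ2 SNR a b c : ℝ → ℝ)
    (hα : ∀ t, α t = Real.exp (∫ τ in (0:ℝ)..t, f τ))
    (hσ2 : ∀ t, σ2 t = α t ^ 2 * ∫ τ in (0:ℝ)..t, g τ ^ 2 / α τ ^ 2)
    (hSNR : ∀ t, SNR t = α t ^ 2 / σ2 t)
    (ha : ∀ t, a t = (α t / α T) * (SNR T / SNR t))
    (hb : ∀ t, b t = α t * (1 - SNR T / SNR t))
    (hc : ∀ t, c t = Real.sqrt (σ2 t * (1 - SNR T / SNR t))) :
    ∀ t ∈ Set.Ioo 0 T, ∃ da db dc : ℝ,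
      HasDerivAt a da t ∧ HasDerivAt b db t ∧ HasDerivAt c dc t ∧
      da - a t * dc / c t = g t ^ 2 * a t / (2 * c t ^ 2) ∧
      db - b t * dc / c t = -(g t ^ 2 * b t / (2 * c t ^ 2)) ∧
      ∀ x xT xhat : Fin d → ℝ,
        (dc / c t) • x + (g t ^ 2 * a t / (2 * c t ^ 2)) • xT
          - (g t ^ 2 * b t / (2 * c t ^ 2)) • xhat
        = (f t + g t ^ 2 / σ2 t - g t ^ 2 / (2 * c t ^ 2)) • x
          + (g t ^ 2 * a t / (2 * c t ^ 2)) • xT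
          - (g t ^ 2 * b t / (2 * c t ^ 2)) • xhat := by
  intro t ht
  have hαpos : ∀ s, 0 < α s := fun s => hα s ▸ exp_pos _
  have hα_deriv : ∀ s, HasDerivAt α (f s * α s) s := fun s => by
    rw [funext hα]; exact hasDerivAt_exp_integral hf 0 s
  have hG : Continuous fun τ => g τ ^ 2 / α τ ^ 2 :=
    (hg.pow 2).div ((continuous_iff_continuousAt.2 fun s => (hα_deriv s).continuousAt).pow 2)
      fun s => (pow_pos (hαpos s) 2).ne'
  set I : ℝ → ℝ := fun s => ∫ τ in (0:ℝ)..s, g τ ^ 2 / α τ ^ 2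
  have hI_deriv : HasDerivAt I (g t ^ 2 / α t ^ 2) t :=
    (hG.integral_hasStrictDerivAt 0 t).hasDerivAt
  have hI_mono : StrictMono I :=
    strictMono_integral_of_pos hG (fun s => div_pos (pow_pos (hgpos s) 2) (pow_pos (hαpos s) 2)) 0
  have hIt : 0 < I t := by simpa [I] using hI_mono ht.1
  have hItT : I t < I T := hI_mono ht.2
  have hσ2I : ∀ s, σ2 s = α s ^ 2 * I s := hσ2
  -- holds even where `I s = 0`: both sides are then `0`, as `x / 0 = 0`
  have hSNR_ratio : ∀ s, SNR T / SNR s = I s / I T := fun s => by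
    rw [hSNR, hSNR, hσ2I, hσ2I, div_mul_cancel_left₀ (pow_pos (hαpos T) 2).ne',
      div_mul_cancel_left₀ (pow_pos (hαpos s) 2).ne', inv_div_inv]
  obtain rfl : a = coeffA α I T := funext fun s => by rw [ha, hSNR_ratio]; rfl
  obtain rfl : b = coeffB α I T := funext fun s => by rw [hb, hSNR_ratio]; rfl
  obtain rfl : c = coeffC α I T := funext fun s => by rw [hc, hSNR_ratio, hσ2I]; rfl
  obtain ⟨da, db, dc, hA, hB, hC, hA_drift, hB_drift, hC_drift⟩ :=
    exists_hasDerivAt_coeff_drift (hα_deriv t) hI_deriv (hαpos t).ne' hIt hItT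
  refine ⟨da, db, dc, hA, hB, hC, hA_drift, hB_drift, fun x xT xhat => ?_⟩
  rw [hC_drift, hσ2I]

/-- Proposition 3 (equivalence of the DBIM ODE to the DDBM probability-flow ODE):
on `(0, T)`, `a_t′ − a_t c_t′/c_t = g² a_t/(2c_t²)` and `b_t′ − b_t c_t′/c_t = −g² b_t/(2c_t²)`,
hence the DBIM ODE drift `(c_t′/c_t) x + (g² a_t/(2c_t²)) x_T − (g² b_t/(2c_t²)) x̂`
coincides with the PF-ODE drift
`(f + g²/σ_t² − g²/(2c_t²)) x + (g² a_t/(2c_t²)) x_T − (g² b_t/(2c_t²)) x̂`. -/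
theorem dbim_ode_equals_pf_ode (d : ℕ) (f g : ℝ → ℝ)
    (hf : Continuous f) (hg : Continuous g) (hgpos : ∀ t, 0 < g t)
    (T : ℝ) (hT : 0 < T)
    (α σ2 SNR a b c : ℝ → ℝ)
    (hα : ∀ t, α t = Real.exp (∫ τ in (0:ℝ)..t, f τ))
    (hσ2 : ∀ t, σ2 t = α t ^ 2 * ∫ τ in (0:ℝ)..t, g τ ^ 2 / α τ ^ 2)
    (hSNR : ∀ t, SNR t = α t ^ 2 / σ2 t)
    (ha : ∀ t, a t = (α t / α T) * (SNR T / SNR t))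
    (hb : ∀ t, b t = α t * (1 - SNR T / SNR t))
    (hc : ∀ t, c t = Real.sqrt (σ2 t * (1 - SNR T / SNR t))) :
    ∀ t ∈ Set.Ioo 0 T, ∃ da db dc : ℝ,
      HasDerivAt a da t ∧ HasDerivAt b db t ∧ HasDerivAt c dc t ∧
      da - a t * dc / c t = g t ^ 2 * a t / (2 * c t ^ 2) ∧
      db - b t * dc / c t = -(g t ^ 2 * b t / (2 * c t ^ 2)) ∧
      ∀ x xT xhat : Fin d → ℝ,
        (dc / c t) • x + (g t ^ 2 * a t / (2 * c t ^ 2)) • xT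
          - (g t ^ 2 * b t / (2 * c t ^ 2)) • xhat
        = (f t + g t ^ 2 / σ2 t - g t ^ 2 / (2 * c t ^ 2)) • x
          + (g t ^ 2 * a t / (2 * c t ^ 2)) • xT
          - (g t ^ 2 * b t / (2 * c t ^ 2)) • xhat :=
  dbim_ode_equals_pf_ode_general d f g hf hg hgpos T α σ2 SNR a b c hα hσ2 hSNR ha hb hc
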